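/- If w ∈ A_d(u), then there exists an increasing chain in the moment graph from u to u·w of degree d' with d' ≤ d; that is, every element of the form u·w with w ∈ A_d(u) is reachable from u by a chain of degree at most d. -/

import Mathlib

open DihedralGroup CoxeterSystem

/-- The infinite dihedral group `D∞`, realized as `DihedralGroup 0`. -/
abbrev Dinf := DihedralGroup 0

/-- View an element of `ZMod 0` as an integer. -/
def toInt (k : ZMod 0) : ℤ := k

/-- The Coxeter matrix of type `A₁⁽¹⁾`: diagonal entries `1`, off-diagonal
entries `0` (encoding infinite order). -/
def Mmat : CoxeterMatrix (Fin 2) where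
  M := !![1, 0; 0, 1]
  isSymm := by decide
  diagonal := by decide
  off_diagonal := by intro i i'; fin_cases i <;> fin_cases i' <;> simp

/-- The generator index `0` (resp. `1`) corresponds to the geometric
reflection `s₀ = sr 0` (resp. `s₁ = sr 1`). -/
def toGen : Fin 2 → Dinf := fun i => if i = 0 then sr 0 else sr 1

/-- The product in `D∞` of a word in the two generators `s₀, s₁`. -/
def wprod (w : List (Fin 2)) : Dinf := (w.map toGen).prod

/-- The explicit reduced word (an alternating word in `s₀` and `s₁`) for an
element of `D∞`. -/
def reducedWord : Dinf → List (Fin 2)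
  | .r k => if 0 ≤ toInt k then alternatingWord 0 1 (2 * (toInt k).natAbs)
      else alternatingWord 1 0 (2 * (toInt k).natAbs)
  | .sr k => if 0 < toInt k then alternatingWord 0 1 (2 * (toInt k).natAbs - 1)
      else alternatingWord 1 0 (2 * (toInt k).natAbs + 1)

/-- The degree map `φ : D∞ → ℕ²`, counting occurrences of `s₀` and of `s₁` in
a reduced word. -/
def φ (g : Dinf) : ℕ × ℕ := ((reducedWord g).count 0, (reducedWord g).count 1)

/-- The explicit (computable) length function on `D∞`. -/
def cLength : Dinf → ℕ
  | .r k => 2 * (toInt k).natAbs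
  | .sr k => if 0 < toInt k then 2 * (toInt k).natAbs - 1 else 2 * (toInt k).natAbs + 1

/-- `t` is a reflection of `D∞`, i.e. an element of the form `sr k`. -/
def IsReflectionD (t : Dinf) : Prop := ∃ k, t = sr k

/-- The moment graph of `D∞` has an edge `u → v` of degree `α` iff
`v = u * s_α` where `s_α` is the (root) reflection of degree `α`. -/
def IsEdge (u v : Dinf) (α : ℕ × ℕ) : Prop := ∃ t : Dinf, IsReflectionD t ∧ φ t = α ∧ v = u * t

/-- Increasing chains in the moment graph of `D∞`: the Coxeter length strictly
increases along each edge, and the degree of the chain is the sum of the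
degrees of its edges. -/
inductive Chain (cs : CoxeterSystem Mmat Dinf) : Dinf → Dinf → ℕ × ℕ → Prop where
  | refl (u : Dinf) : Chain cs u u 0
  | step {u v w : Dinf} {d α : ℕ × ℕ} : Chain cs u v d → IsEdge v w α →
      cs.length v < cs.length w → Chain cs u w (d + α)

/-- Bruhat order on `D∞`: `u ≤ v` iff there is an increasing chain from `u`
to `v` in the moment graph. -/
def BruhatLE (cs : CoxeterSystem Mmat Dinf) (u v : Dinf) : Prop := ∃ d, Chain cs u v d

/-- Strict Bruhat order on `D∞`. -/
def BruhatLT (cs : CoxeterSystem Mmat Dinf) (u v : Dinf) : Prop :=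
  BruhatLE cs u v ∧ u ≠ v

/-- `v` is reachable from `u` by an increasing chain of degree at most `d`. -/
def Reachable (cs : CoxeterSystem Mmat Dinf) (u : Dinf) (d : ℕ × ℕ) (v : Dinf) : Prop :=
  ∃ d', d' ≤ d ∧ Chain cs u v d'

/-- The algebraic set `A_d(u) = { v | ℓ(uv) = ℓ(u) + ℓ(v), φ(v) ≤ d }`. -/
def Ad (cs : CoxeterSystem Mmat Dinf) (u : Dinf) (d : ℕ × ℕ) : Set Dinf :=
  { v | cs.length (u * v) = cs.length u + cs.length v ∧ φ v ≤ d }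

/-- `w` is maximal in `S` with respect to the Bruhat order. -/
def IsMaximalIn (cs : CoxeterSystem Mmat Dinf) (w : Dinf) (S : Set Dinf) : Prop :=
  w ∈ S ∧ ∀ v ∈ S, ¬ BruhatLT cs w v

/-- The combinatorial curve neighborhood `Γ_d(u)`: the Bruhat-maximal elements
among those reachable from `u` by an increasing chain of degree `≤ d`. -/
def CurveNeighborhood (cs : CoxeterSystem Mmat Dinf) (u : Dinf) (d : ℕ × ℕ) : Set Dinf :=
  { v | Reachable cs u d v ∧ ∀ v', Reachable cs u d v' → ¬ BruhatLT cs v v' }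

section Aux

variable (cs : CoxeterSystem Mmat Dinf)

lemma r_one_pow (n : ℕ) : (r 1 : Dinf) ^ n = r (n : ZMod 0) := by
  induction n with
  | zero => simp
  | succ n ih => rw [pow_succ, ih, r_mul_r]; push_cast; ring_nf

lemma r_neg_one_pow (n : ℕ) : (r (-1) : Dinf) ^ n = r (-(n : ZMod 0)) := by
  induction n with
  | zero => simp
  | succ n ih => rw [pow_succ, ih, r_mul_r]; push_cast; ring_nf

lemma prodAlt01 (h0 : cs.simple 0 = sr 0) (h1 : cs.simple 1 = sr 1) (m : ℕ) : cs.wordProd (alternatingWord 0 1 m) =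
    if Even m then r ((m / 2 : ℕ) : ZMod 0) else sr (1 + ((m / 2 : ℕ) : ZMod 0)) := by
  rw [cs.prod_alternatingWord_eq_mul_pow, h0, h1, sr_mul_sr]
  norm_num

lemma prodAlt10 (h0 : cs.simple 0 = sr 0) (h1 : cs.simple 1 = sr 1) (m : ℕ) : cs.wordProd (alternatingWord 1 0 m) =
    if Even m then r (-((m / 2 : ℕ) : ZMod 0)) else sr (-((m / 2 : ℕ) : ZMod 0)) := by
  rw [cs.prod_alternatingWord_eq_mul_pow, h0, h1, sr_mul_sr]
  norm_num


lemma wordProd_reducedWord (h0 : cs.simple 0 = sr 0) (h1 : cs.simple 1 = sr 1)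
    (w : Dinf) : cs.wordProd (reducedWord w) = w := by
  cases w with
  | r k =>
    by_cases hk : 0 ≤ toInt k
    · rw [reducedWord, if_pos hk, prodAlt01 cs h0 h1, if_pos ⟨(toInt k).natAbs, by omega⟩]
      congr 1
      show (((2 * (toInt k).natAbs) / 2 : ℕ) : ℤ) = toInt k
      push_cast
      rcases abs_cases (toInt k) with ⟨ha1, ha2⟩ | ⟨ha1, ha2⟩ <;> omega
    · rw [reducedWord, if_neg hk, prodAlt10 cs h0 h1, if_pos ⟨(toInt k).natAbs, by omega⟩]
      congr 1
      show -(((2 * (toInt k).natAbs) / 2 : ℕ) : ℤ) = toInt k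
      push_cast
      rcases abs_cases (toInt k) with ⟨ha1, ha2⟩ | ⟨ha1, ha2⟩ <;> omega
  | sr k =>
    by_cases hk : 0 < toInt k
    · have hodd : ¬ Even (2 * (toInt k).natAbs - 1) := by
        have : 0 < (toInt k).natAbs := by omega
        simp [Nat.even_sub (by omega : 1 ≤ 2 * (toInt k).natAbs)]
      rw [reducedWord, if_pos hk, prodAlt01 cs h0 h1, if_neg hodd]
      congr 1
      show (1 : ℤ) + (((2 * (toInt k).natAbs - 1) / 2 : ℕ) : ℤ) = toInt k
      push_cast [Nat.cast_sub (by omega : 1 ≤ 2 * (toInt k).natAbs)]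
      rcases abs_cases (toInt k) with ⟨ha1, ha2⟩ | ⟨ha1, ha2⟩ <;> omega
    · have hodd : ¬ Even (2 * (toInt k).natAbs + 1) := by simp [Nat.even_add_one, parity_simps]
      rw [reducedWord, if_neg hk, prodAlt10 cs h0 h1, if_neg hodd]
      congr 1
      show -(((2 * (toInt k).natAbs + 1) / 2 : ℕ) : ℤ) = toInt k
      push_cast
      rcases abs_cases (toInt k) with ⟨ha1, ha2⟩ | ⟨ha1, ha2⟩ <;> omega

lemma length_reducedWord (w : Dinf) : (reducedWord w).length = cLength w := by
  cases w with
  | r k => rw [reducedWord, cLength]; split_ifs <;> rw [length_alternatingWord]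
  | sr k => rw [reducedWord, cLength]; split_ifs <;> rw [length_alternatingWord]

lemma cLength_mul_toGen (g : Dinf) (i : Fin 2) :
    cLength (g * toGen i) ≤ cLength g + 1 := by
  fin_cases i <;> cases g with
  | r k =>
      simp only [toGen, r_mul_sr, cLength]
      norm_num
      have e1 : toInt (-k) = -toInt k := rfl
      have e2 : toInt (1 - k) = 1 - toInt k := rfl
      split_ifs <;> (repeat' split) <;> omega
  | sr k =>
      simp only [toGen, sr_mul_sr, cLength]
      norm_num
      have e1 : toInt (-k) = -toInt k := rfl
      have e2 : toInt (1 - k) = 1 - toInt k := rfl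
      split_ifs <;> (repeat' split) <;> omega

lemma cLength_wordProd_le (h0 : cs.simple 0 = sr 0) (h1 : cs.simple 1 = sr 1)
    (l : List (Fin 2)) : cLength (cs.wordProd l) ≤ l.length := by
  induction l using List.reverseRecOn with
  | nil => rw [CoxeterSystem.wordProd_nil]; decide
  | append_singleton l i ih =>
      have hs : cs.simple i = toGen i := by
        fin_cases i
        · simpa [toGen] using h0
        · simpa [toGen] using h1
      rw [CoxeterSystem.wordProd_append, CoxeterSystem.wordProd_singleton, hs]
      calc cLength (cs.wordProd l * toGen i) ≤ cLength (cs.wordProd l) + 1 :=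
            cLength_mul_toGen _ i
        _ ≤ l.length + 1 := by omega
        _ = (l ++ [i]).length := by simp

lemma length_eq_cLength (h0 : cs.simple 0 = sr 0) (h1 : cs.simple 1 = sr 1)
    (w : Dinf) : cs.length w = cLength w := by
  apply le_antisymm
  · calc cs.length w = cs.length (cs.wordProd (reducedWord w)) := by
          rw [wordProd_reducedWord cs h0 h1]
      _ ≤ (reducedWord w).length := cs.length_wordProd_le _
      _ = cLength w := length_reducedWord w
  · obtain ⟨l, hl, hw⟩ := cs.exists_reduced_word w
    calc cLength w = cLength (cs.wordProd l) := by rw [← hw]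
      _ ≤ l.length := cLength_wordProd_le cs h0 h1 l
      _ = cs.length w := by rw [hw]; exact hl.symm


lemma phi_sr0 : φ (sr 0 : Dinf) = (1, 0) := by decide
lemma phi_sr1 : φ (sr 1 : Dinf) = (0, 1) := by decide

/-- degree of the simple generator `i`. -/
def gdeg (i : Fin 2) : ℕ × ℕ := if i = 0 then (1, 0) else (0, 1)

lemma isEdge_simple (h0 : cs.simple 0 = sr 0) (h1 : cs.simple 1 = sr 1)
    (v : Dinf) (i : Fin 2) : IsEdge v (v * cs.simple i) (gdeg i) := by
  by_cases hi : i = 0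
  · subst hi
    exact ⟨cs.simple 0, ⟨0, h0⟩, by rw [h0]; simpa [gdeg] using phi_sr0, rfl⟩
  · have hi1 : i = 1 := by omega
    subst hi1
    exact ⟨cs.simple 1, ⟨1, h1⟩, by rw [h1]; simpa [gdeg] using phi_sr1, rfl⟩

lemma chain_aux (h0 : cs.simple 0 = sr 0) (h1 : cs.simple 1 = sr 1) (u : Dinf) :
    ∀ l : List (Fin 2), cs.length (u * cs.wordProd l) = cs.length u + l.length →
      Chain cs u (u * cs.wordProd l) (l.count 0, l.count 1) := by
  intro l
  induction l using List.reverseRecOn with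
  | nil =>
      intro _
      have : (([] : List (Fin 2)).count 0, ([] : List (Fin 2)).count 1) = (0 : ℕ × ℕ) := rfl
      rw [this, CoxeterSystem.wordProd_nil, mul_one]
      exact Chain.refl u
  | append_singleton l i ih =>
      intro hlen
      have hsplit : cs.wordProd (l ++ [i]) = cs.wordProd l * cs.simple i := by
        rw [CoxeterSystem.wordProd_append, CoxeterSystem.wordProd_singleton]
      set v := u * cs.wordProd l with hv
      have hws : u * cs.wordProd (l ++ [i]) = v * cs.simple i := by
        rw [hsplit, hv, mul_assoc]
      have hlen' : cs.length (v * cs.simple i) = cs.length u + l.length + 1 := by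
        rw [← hws, hlen, List.length_append, List.length_singleton]; omega
      have hv_le : cs.length v ≤ cs.length u + l.length := by
        calc cs.length v ≤ cs.length u + cs.length (cs.wordProd l) := cs.length_mul_le _ _
          _ ≤ cs.length u + l.length := by
              have := cs.length_wordProd_le l; omega
      have hvs_le : cs.length (v * cs.simple i) ≤ cs.length v + 1 := by
        have := cs.length_mul_le v (cs.simple i)
        rwa [cs.length_simple] at this
      have hv_eq : cs.length v = cs.length u + l.length := by omega
      have hchain : Chain cs u v (l.count 0, l.count 1) := ih hv_eq
      have hlt : cs.length v < cs.length (v * cs.simple i) := by omega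
      have hdeg : ((l ++ [i]).count 0, (l ++ [i]).count 1)
          = (l.count 0, l.count 1) + gdeg i := by
        by_cases hi : i = 0
        · subst hi; simp [List.count_append, gdeg, Prod.ext_iff]
        · have hi1 : i = 1 := by omega
          subst hi1; simp [List.count_append, gdeg, Prod.ext_iff]
      rw [hws, hdeg]
      exact Chain.step hchain (isEdge_simple cs h0 h1 v i) hlt

end Aux

theorem test : True := trivial

/-- If `w ∈ A_d(u)`, then `u * w` is reachable from `u` by an increasing
chain of degree `d' ≤ d` in the moment graph. -/
theorem stmt14 (cs : CoxeterSystem Mmat Dinf)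
    (h0 : cs.simple 0 = sr 0) (h1 : cs.simple 1 = sr 1)
    (u : Dinf) (d : ℕ × ℕ) (w : Dinf) (hw : w ∈ Ad cs u d) :
    ∃ d', d' ≤ d ∧ Chain cs u (u * w) d' := by
  obtain ⟨hlen, hφ⟩ := hw
  have hwp : cs.wordProd (reducedWord w) = w := wordProd_reducedWord cs h0 h1 w
  have hL : (reducedWord w).length = cs.length w := by
    rw [length_reducedWord, length_eq_cLength cs h0 h1]
  refine ⟨((reducedWord w).count 0, (reducedWord w).count 1), hφ, ?_⟩
  have := chain_aux cs h0 h1 u (reducedWord w) (by rw [hwp, hL]; exact hlen)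
  rwa [hwp] at this
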